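/- arXiv:2101.12601 — 5 statements merged into one kernel-verified Lean document; each statement's English description precedes it below -/
import Mathlib

section
/- For every real a ≥ 0 and every real z with 0 ≤ z < √e/2, one has a · exp(−max(a−1, 0)/2) · z < 1. -/
/-!
The factor `a · exp(−(a−1)₊/2)` never exceeds `2/√e`, whatever the sign of `a`: for `a ≥ 0` it is
at most `a · exp(−(a−1)/2) = 2√e · (a/2) · exp(−a/2)`, and `y · exp(−y) ≤ 1/e`. So `z < √e/2`
suffices.
-/

open Real

lemma mul_exp_neg_sub_one_div_two_le (a : ℝ) : a * exp (-(a - 1) / 2) ≤ 2 / √(exp 1) := by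
  have hsqrt : √(exp 1) = exp (1 / 2) := by rw [← exp_half]
  calc a * exp (-(a - 1) / 2) = 2 * (a / 2 * exp (-(a / 2))) * exp (1 / 2) := by
        rw [mul_assoc 2, mul_assoc, ← exp_add]; ring_nf
    _ ≤ 2 * exp (-1) * exp (1 / 2) := by gcongr; exact mul_exp_neg_le_exp_neg_one (a / 2)
    _ = 2 / √(exp 1) := by
      rw [hsqrt, mul_assoc, ← exp_add, div_eq_mul_inv 2, ← exp_neg]
      norm_num

lemma mul_exp_neg_max_sub_one_zero_div_two_le (a : ℝ) :
    a * exp (-(max (a - 1) 0) / 2) ≤ 2 / √(exp 1) := by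
  rcases le_total a 0 with ha | ha
  · exact (mul_nonpos_of_nonpos_of_nonneg ha (exp_pos _).le).trans (by positivity)
  · calc a * exp (-(max (a - 1) 0) / 2) ≤ a * exp (-(a - 1) / 2) := by
          gcongr; exact le_max_left _ _
      _ ≤ 2 / √(exp 1) := mul_exp_neg_sub_one_div_two_le a

theorem contraction_condition_holds_general (a z : ℝ) (hz0 : 0 ≤ z)
    (hz : z < Real.sqrt (Real.exp 1) / 2) :
    a * Real.exp (-(max (a - 1) 0) / 2) * z < 1 := by
  have hsqrt_pos : 0 < √(exp 1) := sqrt_pos.2 (exp_pos 1)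
  calc a * exp (-(max (a - 1) 0) / 2) * z ≤ 2 / √(exp 1) * z := by
        gcongr; exact mul_exp_neg_max_sub_one_zero_div_two_le a
    _ < 2 / √(exp 1) * (√(exp 1) / 2) := by gcongr
    _ = 1 := by field_simp

/-- For every `a ≥ 0` and `0 ≤ z < √e/2`, one has `a · exp(−max(a−1,0)/2) · z < 1`. -/
theorem contraction_condition_holds (a z : ℝ) (ha : 0 ≤ a) (hz0 : 0 ≤ z)
    (hz : z < Real.sqrt (Real.exp 1) / 2) :
    a * Real.exp (-(max (a - 1) 0) / 2) * z < 1 :=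
  contraction_condition_holds_general a z hz0 hz
end

section
/- Let (Ω, ℱ, P) be a probability space, let Δ and Δ̃ be random variables taking values in [0, 1/2], and suppose the conditional expectation satisfies E[Δ | σ(Δ̃)] ≤ Δ̃ almost surely. Let α > 0 and let g : ℝ → ℝ be differentiable on [0, 1/2], decreasing on [0, 1/2], and α-strongly convex on [0, 1/2] (i.e., x ↦ g(x) − (α/2)x² is convex on [0, 1/2]). Then E[g(Δ)] − E[g(Δ̃)] ≥ (α/2) · E[(Δ − Δ̃)²]. In particular E[g(Δ)] − E[g(Δ̃)] ≥ 0. -/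
/-!
Write `D` for the derivative of `g` within `[0, 1/2]`. Strong convexity gives the pointwise
tangent bound `g x - g y ≥ D y * (x - y) + α / 2 * (x - y) ^ 2`. The variable `D (Δ̃)` is
`σ(Δ̃)`-measurable and nonpositive, so pulling it out of the conditional expectation gives
`E[D(Δ̃) Δ] = E[D(Δ̃) E[Δ | σ(Δ̃)]] ≥ E[D(Δ̃) Δ̃]`: the linear term has nonnegative expectation.
Since `g` is convex, `D` is monotone, hence measurable and bounded on `[0, 1/2]`.
-/

open MeasureTheory Set

theorem ConvexOn.mul_sub_le_sub_of_hasDerivWithinAt {S : Set ℝ} {f : ℝ → ℝ} {f' x y : ℝ}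
    (hf : ConvexOn ℝ S f) (hx : x ∈ S) (hy : y ∈ S) (hf' : HasDerivWithinAt f f' S y) :
    f' * (x - y) ≤ f x - f y := by
  rcases lt_trichotomy x y with hxy | rfl | hxy
  · have h := hf.slope_le_of_hasDerivWithinAt hx hy hxy hf'
    rw [slope_def_field, div_le_iff₀ (sub_pos.2 hxy)] at h
    linarith
  · simp
  · have h := hf.le_slope_of_hasDerivWithinAt hy hx hxy hf'
    rwa [slope_def_field, le_div_iff₀ (sub_pos.2 hxy)] at h

theorem StrongConvexOn.mul_sub_add_sq_le_sub_of_hasDerivWithinAt {S : Set ℝ} {f : ℝ → ℝ}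
    {m f' x y : ℝ} (hf : StrongConvexOn S m f) (hx : x ∈ S) (hy : y ∈ S)
    (hf' : HasDerivWithinAt f f' S y) :
    f' * (x - y) + m / 2 * (x - y) ^ 2 ≤ f x - f y := by
  have hconv : ConvexOn ℝ S fun x ↦ f x - m / 2 * x ^ 2 := by
    simpa only [Real.norm_eq_abs, sq_abs] using strongConvexOn_iff_convex.1 hf
  have hsq : HasDerivWithinAt (fun x ↦ m / 2 * x ^ 2) (m * y) S y := by
    refine ((hasDerivAt_pow 2 y).const_mul (m / 2)).hasDerivWithinAt.congr_deriv ?_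
    norm_num
    ring
  have := hconv.mul_sub_le_sub_of_hasDerivWithinAt hx hy (hf'.sub hsq)
  linarith

section Composition

variable {Ω : Type*} {mΩ : MeasurableSpace Ω} {s : Set ℝ} {f : ℝ → ℝ} {X : Ω → ℝ}

theorem MonotoneOn.measurable_comp (hf : MonotoneOn f s) (hX : Measurable X)
    (hXs : ∀ ω, X ω ∈ s) : Measurable fun ω ↦ f (X ω) :=
  (monotoneOn_iff_monotone.1 hf).measurable.comp (hX.subtype_mk (h := hXs))

theorem AntitoneOn.measurable_comp (hf : AntitoneOn f s) (hX : Measurable X)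
    (hXs : ∀ ω, X ω ∈ s) : Measurable fun ω ↦ f (X ω) :=
  (antitoneOn_iff_antitone.1 hf).measurable.comp (hX.subtype_mk (h := hXs))

theorem AntitoneOn.integrable_comp {μ : Measure Ω} [IsFiniteMeasure μ] {a b : ℝ}
    (hf : AntitoneOn f (Icc a b)) (hX : Measurable X) (hXs : ∀ ω, X ω ∈ Icc a b) :
    Integrable (fun ω ↦ f (X ω)) μ :=
  .of_mem_Icc _ _ (hf.measurable_comp hX hXs).aemeasurable
    (.of_forall fun ω ↦ hf.mapsTo_Icc (hXs ω))

end Composition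

theorem integral_mul_le_integral_mul_of_condExp_le {Ω : Type*} {m m0 : MeasurableSpace Ω}
    {μ : Measure Ω} [IsFiniteMeasure μ] (hm : m ≤ m0) {X Y Z : Ω → ℝ} {C : ℝ}
    (hY : AEStronglyMeasurable[m] Y μ) (hY_mem : ∀ᵐ ω ∂μ, Y ω ∈ Icc C 0)
    (hX : Integrable X μ) (hZ : Integrable Z μ) (hXZ : μ[X | m] ≤ᵐ[μ] Z) :
    ∫ ω, Y ω * Z ω ∂μ ≤ ∫ ω, Y ω * X ω ∂μ := by
  have : IsFiniteMeasure (μ.trim hm) := isFiniteMeasure_trim hm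
  have hY' : AEStronglyMeasurable[m0] Y μ := hY.mono hm
  have hY_bdd : ∀ᵐ ω ∂μ, ‖Y ω‖ ≤ max |C| |0| := by
    filter_upwards [hY_mem] with ω hω using abs_le_max_abs_abs hω.1 hω.2
  calc ∫ ω, Y ω * Z ω ∂μ ≤ ∫ ω, Y ω * μ[X | m] ω ∂μ := by
        refine integral_mono_ae (hZ.bdd_mul hY' hY_bdd) (integrable_condExp.bdd_mul hY' hY_bdd) ?_
        filter_upwards [hY_mem, hXZ] with ω hYω hω
        exact mul_le_mul_of_nonpos_left hω hYω.2
    _ = ∫ ω, μ[Y * X | m] ω ∂μ :=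
        integral_congr_ae
          (condExp_mul_of_aestronglyMeasurable_left hY (hX.bdd_mul hY' hY_bdd) hX).symm
    _ = ∫ ω, Y ω * X ω ∂μ := integral_condExp hm

theorem StrongConvexOn.integral_mul_sub_add_sq_le_integral_sub {Ω : Type*}
    {mΩ : MeasurableSpace Ω} {μ : Measure Ω} {S : Set ℝ} {f f' : ℝ → ℝ} {m : ℝ} {X Z : Ω → ℝ}
    (hf : StrongConvexOn S m f)
    (hf' : ∀ y ∈ S, HasDerivWithinAt f (f' y) S y) (hX : ∀ ω, X ω ∈ S) (hZ : ∀ ω, Z ω ∈ S)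
    (hfX : Integrable (fun ω ↦ f (X ω)) μ) (hfZ : Integrable (fun ω ↦ f (Z ω)) μ)
    (hf'X : Integrable (fun ω ↦ f' (Z ω) * X ω) μ) (hf'Z : Integrable (fun ω ↦ f' (Z ω) * Z ω) μ)
    (hsq : Integrable (fun ω ↦ (X ω - Z ω) ^ 2) μ) :
    (∫ ω, f' (Z ω) * X ω ∂μ - ∫ ω, f' (Z ω) * Z ω ∂μ) + m / 2 * ∫ ω, (X ω - Z ω) ^ 2 ∂μ ≤
      ∫ ω, f (X ω) ∂μ - ∫ ω, f (Z ω) ∂μ := by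
  calc (∫ ω, f' (Z ω) * X ω ∂μ - ∫ ω, f' (Z ω) * Z ω ∂μ) + m / 2 * ∫ ω, (X ω - Z ω) ^ 2 ∂μ
      = ∫ ω, f' (Z ω) * X ω - f' (Z ω) * Z ω + m / 2 * (X ω - Z ω) ^ 2 ∂μ := by
        rw [integral_add (f := fun ω ↦ f' (Z ω) * X ω - f' (Z ω) * Z ω) (hf'X.sub hf'Z)
          (hsq.const_mul _), integral_sub hf'X hf'Z, integral_const_mul]
    _ ≤ ∫ ω, f (X ω) - f (Z ω) ∂μ := by
        refine integral_mono ((hf'X.sub hf'Z).add (hsq.const_mul _)) (hfX.sub hfZ) fun ω ↦ ?_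
        rw [← mul_sub]
        exact hf.mul_sub_add_sq_le_sub_of_hasDerivWithinAt (hX ω) (hZ ω) (hf' _ (hZ ω))
    _ = ∫ ω, f (X ω) ∂μ - ∫ ω, f (Z ω) ∂μ := integral_sub hfX hfZ

/-- If `Δ, Δ̃` take values in `[0,1/2]` and `E[Δ | σ(Δ̃)] ≤ Δ̃` a.s., and `g` is
differentiable, decreasing, and `α`-strongly convex on `[0,1/2]`, then
`E[g(Δ)] − E[g(Δ̃)] ≥ (α/2)·E[(Δ − Δ̃)²] ≥ 0`. -/
theorem potential_nonneg {Ω : Type*} [m0 : MeasurableSpace Ω]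
    (μ : Measure Ω) [IsProbabilityMeasure μ]
    (Δ Δt : Ω → ℝ) (hΔ : Measurable Δ) (hΔt : Measurable Δt)
    (hΔr : ∀ ω, Δ ω ∈ Set.Icc (0 : ℝ) (1 / 2))
    (hΔtr : ∀ ω, Δt ω ∈ Set.Icc (0 : ℝ) (1 / 2))
    (hdeg : μ[Δ | MeasurableSpace.comap Δt Real.measurableSpace] ≤ᵐ[μ] Δt)
    (α : ℝ) (hα : 0 < α) (g : ℝ → ℝ)
    (hg_diff : DifferentiableOn ℝ g (Set.Icc 0 (1 / 2)))
    (hg_anti : AntitoneOn g (Set.Icc 0 (1 / 2)))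
    (hg_conv : ConvexOn ℝ (Set.Icc 0 (1 / 2)) (fun x => g x - α / 2 * x ^ 2)) :
    α / 2 * ∫ ω, (Δ ω - Δt ω) ^ 2 ∂μ ≤ (∫ ω, g (Δ ω) ∂μ) - ∫ ω, g (Δt ω) ∂μ ∧
    0 ≤ (∫ ω, g (Δ ω) ∂μ) - ∫ ω, g (Δt ω) ∂μ := by
  set D := derivWithin g (Icc 0 (1 / 2))
  have hg_strong : StrongConvexOn (Icc 0 (1 / 2)) α g :=
    strongConvexOn_iff_convex.2 (by simpa only [Real.norm_eq_abs, sq_abs] using hg_conv)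
  have hD_mono : MonotoneOn D (Icc 0 (1 / 2)) :=
    (hg_strong.convexOn fun _ ↦ by positivity).monotoneOn_derivWithin hg_diff
  have hDΔt_mem : ∀ ω, D (Δt ω) ∈ Icc (D 0) 0 := fun ω ↦
    ⟨(hD_mono.mapsTo_Icc (hΔtr ω)).1, hg_anti.derivWithin_nonpos⟩
  have hDΔt_meas := hD_mono.measurable_comp (comap_measurable Δt) hΔtr
  have hDΔt_bdd : ∀ᵐ ω ∂μ, ‖D (Δt ω)‖ ≤ max |D 0| |0| :=
    .of_forall fun ω ↦ abs_le_max_abs_abs (hDΔt_mem ω).1 (hDΔt_mem ω).2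
  have hDΔt_aesm := (hDΔt_meas.mono hΔt.comap_le le_rfl).aestronglyMeasurable (μ := μ)
  have hΔ_int : Integrable Δ μ := .of_mem_Icc 0 (1 / 2) hΔ.aemeasurable (.of_forall hΔr)
  have hΔt_int : Integrable Δt μ := .of_mem_Icc 0 (1 / 2) hΔt.aemeasurable (.of_forall hΔtr)
  have hsq_int : Integrable (fun ω ↦ (Δ ω - Δt ω) ^ 2) μ :=
    .of_mem_Icc 0 1 ((hΔ.sub hΔt).pow_const 2).aemeasurable (.of_forall fun ω ↦
      ⟨sq_nonneg _, by nlinarith [mem_Icc.1 (hΔr ω), mem_Icc.1 (hΔtr ω)]⟩)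
  have hcond : ∫ ω, D (Δt ω) * Δt ω ∂μ ≤ ∫ ω, D (Δt ω) * Δ ω ∂μ :=
    integral_mul_le_integral_mul_of_condExp_le hΔt.comap_le hDΔt_meas.aestronglyMeasurable
      (.of_forall hDΔt_mem) hΔ_int hΔt_int hdeg
  have htangent := hg_strong.integral_mul_sub_add_sq_le_integral_sub
    (fun y hy ↦ (hg_diff y hy).hasDerivWithinAt) hΔr hΔtr (hg_anti.integrable_comp hΔ hΔr)
    (hg_anti.integrable_comp hΔt hΔtr)
    (hΔ_int.bdd_mul hDΔt_aesm hDΔt_bdd) (hΔt_int.bdd_mul hDΔt_aesm hDΔt_bdd) hsq_int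
  have hmain : α / 2 * ∫ ω, (Δ ω - Δt ω) ^ 2 ∂μ ≤ (∫ ω, g (Δ ω) ∂μ) - ∫ ω, g (Δt ω) ∂μ := by
    linarith
  exact ⟨hmain, (mul_nonneg (by positivity) (integral_nonneg fun _ ↦ sq_nonneg _)).trans hmain⟩
end

section
/- For every real θ with 0 ≤ θ < 1, the function F_θ : ℝ → ℝ defined by F_θ(r) = 2·arctanh(θ·tanh(r/2)) is Lipschitz continuous with Lipschitz constant θ. -/
/-!
Since `tanh = sinh / cosh`, `F_θ(r) = log (cosh u + θ sinh u) - log (cosh u - θ sinh u)` with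
`u = r / 2`, whose derivative is `θ / (cosh² u - θ² sinh² u)`. For `|θ| ≤ 1` the denominator is at
least `cosh² u - sinh² u = 1`, so `|F_θ'| ≤ |θ|` and the mean value theorem gives the bound.
-/

/-- The inverse hyperbolic tangent. -/
noncomputable def arctanh (y : ℝ) : ℝ := Real.log ((1 + y) / (1 - y)) / 2

/-- The belief-propagation message function. -/
noncomputable def Ftheta (θ r : ℝ) : ℝ := 2 * arctanh (θ * Real.tanh (r / 2))

open Real

lemma cosh_add_mul_sinh_pos {θ : ℝ} (hθ : |θ| ≤ 1) (x : ℝ) : 0 < cosh x + θ * sinh x := by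
  have : |θ * sinh x| < cosh x := by
    rw [abs_mul, abs_sinh]
    calc |θ| * sinh |x| ≤ sinh |x| := mul_le_of_le_one_left (sinh_nonneg_iff.2 (abs_nonneg x)) hθ
      _ < cosh |x| := sinh_lt_cosh _
      _ = cosh x := cosh_abs x
  linarith [neg_abs_le (θ * sinh x)]

lemma one_le_cosh_sq_sub_mul_sinh_sq {θ : ℝ} (hθ : |θ| ≤ 1) (x : ℝ) :
    1 ≤ cosh x ^ 2 - θ ^ 2 * sinh x ^ 2 := by
  have hθ2 : θ ^ 2 ≤ 1 := (sq_le_one_iff_abs_le_one θ).2 hθ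
  nlinarith [cosh_sq x, sq_nonneg (sinh x)]

lemma hasDerivAt_log_cosh_add_mul_sinh {θ : ℝ} (hθ : |θ| ≤ 1) (x : ℝ) :
    HasDerivAt (fun x ↦ log (cosh x + θ * sinh x))
      ((sinh x + θ * cosh x) / (cosh x + θ * sinh x)) x :=
  ((hasDerivAt_cosh x).add ((hasDerivAt_sinh x).const_mul θ)).log
    (cosh_add_mul_sinh_pos hθ x).ne'

lemma Ftheta_eq_log_sub_log {θ : ℝ} (hθ : |θ| ≤ 1) (r : ℝ) :
    Ftheta θ r = log (cosh (r / 2) + θ * sinh (r / 2))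
      - log (cosh (r / 2) + -θ * sinh (r / 2)) := by
  have hplus := cosh_add_mul_sinh_pos hθ (r / 2)
  have hminus := cosh_add_mul_sinh_pos (abs_neg θ ▸ hθ) (r / 2)
  have hcosh := cosh_pos (r / 2)
  rw [Ftheta, arctanh, tanh_eq_sinh_div_cosh, mul_div_cancel₀ _ two_ne_zero,
    ← log_div hplus.ne' hminus.ne']
  congr 1
  field_simp
  ring

lemma hasDerivAt_Ftheta {θ : ℝ} (hθ : |θ| ≤ 1) (r : ℝ) :
    HasDerivAt (Ftheta θ) (θ / (cosh (r / 2) ^ 2 - θ ^ 2 * sinh (r / 2) ^ 2)) r := by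
  have hplus := cosh_add_mul_sinh_pos hθ (r / 2)
  have hminus := cosh_add_mul_sinh_pos (abs_neg θ ▸ hθ) (r / 2)
  have hderiv := ((hasDerivAt_log_cosh_add_mul_sinh hθ (r / 2)).sub
    (hasDerivAt_log_cosh_add_mul_sinh (abs_neg θ ▸ hθ) (r / 2))).comp r
    ((hasDerivAt_id r).div_const 2)
  rw [funext (Ftheta_eq_log_sub_log hθ)]
  refine hderiv.congr_deriv ?_
  have hnum : (sinh (r / 2) + θ * cosh (r / 2)) * (cosh (r / 2) + -θ * sinh (r / 2))
      - (cosh (r / 2) + θ * sinh (r / 2)) * (sinh (r / 2) + -θ * cosh (r / 2)) = 2 * θ := by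
    linear_combination 2 * θ * cosh_sq (r / 2)
  rw [div_sub_div _ _ hplus.ne' hminus.ne', hnum]
  ring

lemma lipschitzWith_Ftheta {θ : ℝ} (hθ : |θ| ≤ 1) : LipschitzWith ‖θ‖₊ (Ftheta θ) := by
  refine lipschitzWith_of_nnnorm_deriv_le (fun r ↦ (hasDerivAt_Ftheta hθ r).differentiableAt)
    fun r ↦ ?_
  have hden := one_le_cosh_sq_sub_mul_sinh_sq hθ (r / 2)
  rw [(hasDerivAt_Ftheta hθ r).deriv, ← NNReal.coe_le_coe, coe_nnnorm, coe_nnnorm, norm_div,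
    Real.norm_of_nonneg (zero_le_one.trans hden)]
  exact div_le_self (norm_nonneg θ) hden

/-- For `0 ≤ θ < 1`, the function `F_θ(r) = 2 arctanh(θ tanh(r/2))` is
Lipschitz with constant `θ`. -/
theorem Ftheta_lipschitz (θ : ℝ) (hθ0 : 0 ≤ θ) (hθ1 : θ < 1) :
    LipschitzWith (Real.toNNReal θ) (Ftheta θ) := by
  rw [Real.toNNReal_eq_nnnorm_of_nonneg hθ0]
  exact lipschitzWith_Ftheta (abs_le.2 ⟨by linarith, hθ1.le⟩)
end

section
/- Let d be a positive integer and θ ∈ (0, 1) with d·θ > 1. Then there exist ε > 0 and x > 0 such that for every η with 1/2 − ε < η < 1/2, one has d·F_θ(x) − log((1−η)/η) > x, where F_θ(r) = 2·arctanh(θ·tanh(r/2)). -/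
open Filter Topology

lemma two_mul_le_log_one_add_sub_log_one_sub {y : ℝ} (hy0 : 0 ≤ y) (hy1 : y < 1) :
    2 * y ≤ Real.log (1 + y) - Real.log (1 - y) := by
  have hsum := Real.hasSum_log_sub_log_of_abs_lt_one (abs_lt.mpr ⟨by linarith, hy1⟩)
  simpa using le_hasSum hsum 0 fun k _ => by positivity

lemma self_le_arctanh {y : ℝ} (hy0 : 0 ≤ y) (hy1 : y < 1) : y ≤ arctanh y := by
  rw [arctanh, Real.log_div (by linarith) (by linarith)]
  linarith [two_mul_le_log_one_add_sub_log_one_sub hy0 hy1]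

lemma Real.tanh_nonneg {t : ℝ} (ht : 0 ≤ t) : 0 ≤ Real.tanh t := by
  rw [Real.tanh_eq_sinh_div_cosh]
  exact div_nonneg (Real.sinh_nonneg_iff.mpr ht) (Real.cosh_pos t).le

lemma two_mul_mul_tanh_le_Ftheta {θ r : ℝ} (hθ0 : 0 ≤ θ) (hθ1 : θ ≤ 1) (hr : 0 ≤ r) :
    2 * (θ * Real.tanh (r / 2)) ≤ Ftheta θ r := by
  have htanh := Real.tanh_nonneg (by positivity : 0 ≤ r / 2)
  have hlt : θ * Real.tanh (r / 2) < 1 :=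
    lt_of_le_of_lt (mul_le_of_le_one_left htanh hθ1) (Real.tanh_lt_one _)
  exact mul_le_mul_of_nonneg_left (self_le_arctanh (mul_nonneg hθ0 htanh) hlt) zero_le_two

lemma exists_pos_lt_mul_tanh {D : ℝ} (hD : 1 < D) : ∃ t, 0 < t ∧ t < D * Real.tanh t := by
  have hcosh : ∀ᶠ t in 𝓝 0, Real.cosh t < D :=
    Real.continuous_cosh.continuousAt.eventually_lt continuousAt_const (by simpa using hD)
  obtain ⟨t, ht, hcosh_t⟩ := hcosh.exists_gt
  refine ⟨t, ht, ?_⟩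
  rw [Real.tanh_eq_sinh_div_cosh, mul_div_assoc', lt_div_iff₀ (Real.cosh_pos t)]
  calc t * Real.cosh t < t * D := mul_lt_mul_of_pos_left hcosh_t ht
    _ < D * Real.sinh t := by nlinarith [Real.self_lt_sinh_iff.mpr ht]

lemma exists_pos_lt_mul_Ftheta {d θ : ℝ} (hθ0 : 0 ≤ θ) (hθ1 : θ ≤ 1) (hdθ : 1 < d * θ) :
    ∃ x, 0 < x ∧ x < d * Ftheta θ x := by
  obtain ⟨t, ht, hlt⟩ := exists_pos_lt_mul_tanh hdθ
  have hd : 0 ≤ d := by nlinarith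
  refine ⟨2 * t, by positivity, ?_⟩
  have hF := two_mul_mul_tanh_le_Ftheta hθ0 hθ1 (by positivity : 0 ≤ 2 * t)
  rw [mul_div_cancel_left₀ t two_ne_zero] at hF
  calc 2 * t < 2 * (d * θ * Real.tanh t) := by linarith
    _ = d * (2 * (θ * Real.tanh t)) := by ring
    _ ≤ d * Ftheta θ (2 * t) := mul_le_mul_of_nonneg_left hF hd

lemma eventually_log_one_sub_div_self_lt {c : ℝ} (hc : 0 < c) :
    ∀ᶠ η in 𝓝 (1 / 2 : ℝ), Real.log ((1 - η) / η) < c := by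
  have hcont : ContinuousAt (fun η : ℝ => Real.log ((1 - η) / η)) (1 / 2) :=
    ((continuousAt_const.sub continuousAt_id).div continuousAt_id (by norm_num)).log
      (by norm_num)
  exact hcont.eventually_lt continuousAt_const (by norm_num [hc])

theorem wsm_fails_bsc_survey_general (d : ℕ) (θ : ℝ)
    (hθ0 : 0 < θ) (hθ1 : θ < 1) (hdθ : 1 < (d : ℝ) * θ) :
    ∃ ε : ℝ, 0 < ε ∧ ∃ x : ℝ, 0 < x ∧
      ∀ η : ℝ, 1 / 2 - ε < η → η < 1 / 2 →
        x < (d : ℝ) * Ftheta θ x - Real.log ((1 - η) / η) := by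
  obtain ⟨x, hx, hgap⟩ := exists_pos_lt_mul_Ftheta hθ0.le hθ1.le hdθ
  obtain ⟨ε, hε, hclose⟩ :=
    Metric.eventually_nhds_iff.mp (eventually_log_one_sub_div_self_lt (sub_pos.mpr hgap))
  refine ⟨ε, hε, x, hx, fun η hη_lower hη_upper => ?_⟩
  have hdist : dist η (1 / 2) < ε := by
    rw [Real.dist_eq, abs_sub_lt_iff]
    constructor <;> linarith
  linarith [hclose hdist]

/-- If `d·θ > 1`, then there exist `ε > 0` and `x > 0` such that for every `η` with
`1/2 − ε < η < 1/2`, one has `d·F_θ(x) − log((1−η)/η) > x`. -/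
theorem wsm_fails_bsc_survey (d : ℕ) (hd : 0 < d) (θ : ℝ)
    (hθ0 : 0 < θ) (hθ1 : θ < 1) (hdθ : 1 < (d : ℝ) * θ) :
    ∃ ε : ℝ, 0 < ε ∧ ∃ x : ℝ, 0 < x ∧
      ∀ η : ℝ, 1 / 2 - ε < η → η < 1 / 2 →
        x < (d : ℝ) * Ftheta θ x - Real.log ((1 - η) / η) :=
  wsm_fails_bsc_survey_general d θ hθ0 hθ1 hdθ
end

section
/- Let θ ∈ (0, 1) and let p(Δ) = 2√(Δ(1−Δ)) and q(Δ) = √(1 − θ²(1−2Δ)²). Then for every Δ ∈ (0, 1/2], the second derivatives satisfy q''(Δ) ≥ θ²·p''(Δ). -/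
/-!
Since `2√(Δ(1−Δ)) = √(1 − (1−2Δ)²)`, both `p` and `q` are of the form `f_c(Δ) = √(1 − c(1−2Δ)²)`,
with `c = 1` and `c = θ²` respectively, and `f_c'' = −4c / f_c³`. As `θ² ≤ 1` gives `p ≤ q`,
the comparison reduces to `θ²·4/q³ ≤ θ²·4/p³`.
-/

open Real

section SqrtOneSubMulSq

variable {c x : ℝ}

lemma hasDerivAt_one_sub_two_mul (x : ℝ) : HasDerivAt (fun y ↦ 1 - 2 * y) (-2) x := by
  simpa using ((hasDerivAt_id x).const_mul 2).const_sub 1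

lemma hasDerivAt_sqrt_one_sub_mul_sq (hx : 0 < 1 - c * (1 - 2 * x) ^ 2) :
    HasDerivAt (fun y ↦ √(1 - c * (1 - 2 * y) ^ 2))
      (2 * c * (1 - 2 * x) / √(1 - c * (1 - 2 * x) ^ 2)) x := by
  have hinner : HasDerivAt (fun y ↦ 1 - c * (1 - 2 * y) ^ 2) (4 * c * (1 - 2 * x)) x :=
    (((hasDerivAt_one_sub_two_mul x).pow 2).const_mul c |>.const_sub 1).congr_deriv (by ring)
  refine ((hasDerivAt_sqrt hx.ne').comp x hinner).congr_deriv ?_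
  field_simp
  ring

lemma hasDerivAt_deriv_sqrt_one_sub_mul_sq (hx : 0 < 1 - c * (1 - 2 * x) ^ 2) :
    HasDerivAt (fun y ↦ 2 * c * (1 - 2 * y) / √(1 - c * (1 - 2 * y) ^ 2))
      (-4 * c / √(1 - c * (1 - 2 * x) ^ 2) ^ 3) x := by
  have hsq : √(1 - c * (1 - 2 * x) ^ 2) ^ 2 = 1 - c * (1 - 2 * x) ^ 2 := sq_sqrt hx.le
  have hpos : 0 < √(1 - c * (1 - 2 * x) ^ 2) := sqrt_pos.mpr hx
  refine (((hasDerivAt_one_sub_two_mul x).const_mul (2 * c)).div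
    (hasDerivAt_sqrt_one_sub_mul_sq hx) hpos.ne').congr_deriv ?_
  field_simp
  linear_combination -4 * c * hsq

lemma iteratedDeriv_two_sqrt_one_sub_mul_sq (hx : 0 < 1 - c * (1 - 2 * x) ^ 2) :
    iteratedDeriv 2 (fun y ↦ √(1 - c * (1 - 2 * y) ^ 2)) x
      = -4 * c / √(1 - c * (1 - 2 * x) ^ 2) ^ 3 := by
  have hopen : IsOpen {y : ℝ | 0 < 1 - c * (1 - 2 * y) ^ 2} :=
    isOpen_lt continuous_const (by fun_prop)
  have hderiv : deriv (fun y ↦ √(1 - c * (1 - 2 * y) ^ 2))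
      =ᶠ[nhds x] fun y ↦ 2 * c * (1 - 2 * y) / √(1 - c * (1 - 2 * y) ^ 2) := by
    filter_upwards [hopen.mem_nhds hx] with y hy
    exact (hasDerivAt_sqrt_one_sub_mul_sq hy).deriv
  rw [iteratedDeriv_succ, iteratedDeriv_one, hderiv.deriv_eq]
  exact (hasDerivAt_deriv_sqrt_one_sub_mul_sq hx).deriv

end SqrtOneSubMulSq

lemma two_mul_sqrt_mul_one_sub (x : ℝ) : 2 * √(x * (1 - x)) = √(1 - 1 * (1 - 2 * x) ^ 2) := by
  rw [show 1 - 1 * (1 - 2 * x) ^ 2 = 2 ^ 2 * (x * (1 - x)) by ring,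
    sqrt_mul (sq_nonneg 2), sqrt_sq zero_le_two]

/-- For `θ ∈ (0,1)`, with `p(Δ) = 2√(Δ(1−Δ))` and `q(Δ) = √(1 − θ²(1−2Δ)²)`,
the second derivatives satisfy `q''(Δ) ≥ θ²·p''(Δ)` for all `Δ ∈ (0, 1/2]`. -/
theorem second_deriv_comparison (θ : ℝ) (hθ0 : 0 < θ) (hθ1 : θ < 1)
    (p q : ℝ → ℝ)
    (hp : p = fun Δ : ℝ => 2 * Real.sqrt (Δ * (1 - Δ)))
    (hq : q = fun Δ : ℝ => Real.sqrt (1 - θ ^ 2 * (1 - 2 * Δ) ^ 2)) :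
    ∀ Δ ∈ Set.Ioc (0 : ℝ) (1 / 2),
      θ ^ 2 * iteratedDeriv 2 p Δ ≤ iteratedDeriv 2 q Δ := by
  rintro Δ ⟨hΔ0, hΔ2⟩
  have hθsq : θ ^ 2 ≤ 1 := pow_le_one₀ hθ0.le hθ1.le
  have hu : (1 - 2 * Δ) ^ 2 < 1 := by nlinarith
  have hp_pos : 0 < 1 - 1 * (1 - 2 * Δ) ^ 2 := by linarith
  have hq_pos : 0 < 1 - θ ^ 2 * (1 - 2 * Δ) ^ 2 := by nlinarith
  have hp_le_q : √(1 - 1 * (1 - 2 * Δ) ^ 2) ≤ √(1 - θ ^ 2 * (1 - 2 * Δ) ^ 2) :=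
    sqrt_le_sqrt (by gcongr)
  rw [hp, hq]
  simp_rw [two_mul_sqrt_mul_one_sub]
  rw [iteratedDeriv_two_sqrt_one_sub_mul_sq hp_pos, iteratedDeriv_two_sqrt_one_sub_mul_sq hq_pos]
  have hp_sqrt_pos : 0 < √(1 - 1 * (1 - 2 * Δ) ^ 2) := sqrt_pos.mpr hp_pos
  calc θ ^ 2 * (-4 * 1 / √(1 - 1 * (1 - 2 * Δ) ^ 2) ^ 3)
      = -(4 * θ ^ 2 / √(1 - 1 * (1 - 2 * Δ) ^ 2) ^ 3) := by ring
    _ ≤ -(4 * θ ^ 2 / √(1 - θ ^ 2 * (1 - 2 * Δ) ^ 2) ^ 3) := by gcongr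
    _ = -4 * θ ^ 2 / √(1 - θ ^ 2 * (1 - 2 * Δ) ^ 2) ^ 3 := by ring
end
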